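/- arXiv:2104.11470 — 3 statements merged into one kernel-verified Lean document; each statement's English description precedes it below -/
import Mathlib

section
/- If f : ℝ^d → ℝ is differentiable with L₁-Lipschitz gradient, then |f_ν(x) − f(x)| ≤ (ν²/2) L₁ d for every x and ν > 0, where f_ν is the Gaussian smoothing of f. -/
/-!
A gradient that is `L`-Lipschitz gives the second-order Taylor bound
`|f (x + u) - f x - ⟪∇f x, u⟫| ≤ L / 2 * ‖u‖ ^ 2`. Averaging `u = ν • v` over a centred
measure kills the linear term, leaving an error of at most `ν ^ 2 / 2 * L * 𝔼‖v‖ ^ 2`; for the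
standard Gaussian, `𝔼‖v‖ ^ 2` is the sum of the variances of the coordinates in an orthonormal
basis, i.e. the dimension.
-/

open MeasureTheory ProbabilityTheory

noncomputable def stdGaussian (d : ℕ) : Measure (EuclideanSpace ℝ (Fin d)) :=
  (Measure.pi fun _ : Fin d => gaussianReal 0 1).map
    (EuclideanSpace.equiv (Fin d) ℝ).symm

open Set
open scoped RealInnerProductSpace

variable {E : Type*} [NormedAddCommGroup E] [InnerProductSpace ℝ E]

theorem abs_sub_sub_inner_gradient_le [CompleteSpace E] {f : E → ℝ} {L : ℝ}
    (hf : Differentiable ℝ f) (hgrad : ∀ x y, ‖gradient f y - gradient f x‖ ≤ L * ‖y - x‖)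
    (x u : E) : |f (x + u) - f x - ⟪gradient f x, u⟫| ≤ L / 2 * ‖u‖ ^ 2 := by
  set φ : ℝ → ℝ := fun t => f (x + t • u) - f x - t * ⟪gradient f x, u⟫
  have hφ : ∀ t, HasDerivAt φ ⟪gradient f (x + t • u) - gradient f x, u⟫ t := by
    intro t
    have hline : HasDerivAt (fun t : ℝ => x + t • u) u t := by
      simpa using ((hasDerivAt_id t).smul_const u).const_add x
    have := (((hf _).hasGradientAt.hasFDerivAt.comp_hasDerivAt t hline).sub_const (f x)).sub
      ((hasDerivAt_id t).mul_const ⟪gradient f x, u⟫)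
    simp only [InnerProductSpace.toDual_apply_apply, id, one_mul] at this
    rw [inner_sub_left]
    exact this
  have hbound : ∀ t ∈ Ico (0 : ℝ) 1,
      ‖⟪gradient f (x + t • u) - gradient f x, u⟫‖ ≤ L * ‖u‖ ^ 2 * t := by
    rintro t ⟨ht, -⟩
    calc ‖⟪gradient f (x + t • u) - gradient f x, u⟫‖
        ≤ ‖gradient f (x + t • u) - gradient f x‖ * ‖u‖ := norm_inner_le_norm _ _
      _ ≤ L * ‖x + t • u - x‖ * ‖u‖ := by gcongr; exact hgrad x _
      _ = L * ‖u‖ ^ 2 * t := by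
        rw [add_sub_cancel_left, norm_smul, Real.norm_of_nonneg ht]
        ring
  have hB : ∀ t, HasDerivAt (fun t => L / 2 * ‖u‖ ^ 2 * t ^ 2) (L * ‖u‖ ^ 2 * t) t := fun t =>
    ((hasDerivAt_pow 2 t).const_mul (L / 2 * ‖u‖ ^ 2)).congr_deriv (by push_cast; ring)
  have := image_norm_le_of_norm_deriv_right_le_deriv_boundary
    (fun t _ => (hφ t).continuousAt.continuousWithinAt) (fun t _ => (hφ t).hasDerivWithinAt)
    (by simp [φ]) hB hbound (right_mem_Icc.2 zero_le_one)
  simpa [φ] using this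

theorem abs_integral_comp_add_smul_sub_le [CompleteSpace E] [MeasurableSpace E] [BorelSpace E]
    {μ : Measure E} [IsProbabilityMeasure μ] (hμ : MemLp id 2 μ) (hmean : ∫ v, v ∂μ = 0)
    {f : E → ℝ} {L : ℝ}
    (hf : Differentiable ℝ f) (hgrad : ∀ x y, ‖gradient f y - gradient f x‖ ≤ L * ‖y - x‖)
    (x : E) (ν : ℝ) :
    |∫ v, f (x + ν • v) ∂μ - f x| ≤ ν ^ 2 / 2 * L * ∫ v, ‖v‖ ^ 2 ∂μ := by
  set c := gradient f x
  set R : E → ℝ := fun v => f (x + ν • v) - f x - ⟪c, ν • v⟫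
  have hR : ∀ v, ‖R v‖ ≤ ν ^ 2 / 2 * L * ‖v‖ ^ 2 := fun v => by
    calc ‖R v‖ ≤ L / 2 * ‖ν • v‖ ^ 2 := abs_sub_sub_inner_gradient_le hf hgrad x (ν • v)
      _ = ν ^ 2 / 2 * L * ‖v‖ ^ 2 := by rw [norm_smul, mul_pow, Real.norm_eq_abs, sq_abs]; ring
  have hmajor : Integrable (fun v => ν ^ 2 / 2 * L * ‖v‖ ^ 2) μ :=
    (hμ.integrable_norm_pow two_ne_zero).const_mul _
  have hsmul : Integrable (fun v => ν • v) μ := (hμ.integrable one_le_two).smul ν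
  have hlin : Integrable (fun v => f x + ⟪c, ν • v⟫) μ :=
    (integrable_const (f x)).add (hsmul.const_inner c)
  have hRint : Integrable R μ := by
    have hfc := hf.continuous
    exact hmajor.mono' (by fun_prop) (ae_of_all _ hR)
  have hsplit : ∫ v, f (x + ν • v) ∂μ = f x + ∫ v, R v ∂μ := by
    have hpt : (fun v => f (x + ν • v)) = fun v => (f x + ⟪c, ν • v⟫) + R v := by
      funext v; simp only [R]; ring
    rw [hpt, integral_add hlin hRint, integral_add (integrable_const _) (hsmul.const_inner c),
      integral_inner hsmul, integral_smul, hmean]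
    simp
  rw [hsplit, add_sub_cancel_left, ← integral_const_mul]
  exact norm_integral_le_of_norm_le hmajor (ae_of_all _ hR)

theorem integral_norm_sq_stdGaussian [FiniteDimensional ℝ E] [MeasurableSpace E] [BorelSpace E] :
    ∫ v, ‖v‖ ^ 2 ∂(ProbabilityTheory.stdGaussian E) = Module.finrank ℝ E := by
  set b := stdOrthonormalBasis ℝ E
  have hcoord : ∀ i, ∫ v, ⟪b i, v⟫ ^ 2 ∂(ProbabilityTheory.stdGaussian E) = 1 := fun i => by
    have := variance_of_integral_eq_zero (innerSL ℝ (b i)).continuous.aemeasurable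
      (integral_strongDual_stdGaussian _)
    rw [variance_dual_stdGaussian, innerSL_apply_norm, b.norm_eq_one, one_pow] at this
    simpa using this.symm
  have hint : ∀ i, Integrable (fun v => ⟪b i, v⟫ ^ 2) (ProbabilityTheory.stdGaussian E) :=
    fun i => (IsGaussian.memLp_dual _ (innerSL ℝ (b i)) 2 (by simp)).integrable_sq
  simp_rw [← b.sum_sq_inner_right]
  rw [integral_finsetSum _ fun i _ => hint i]
  simp [hcoord]

theorem stdGaussian_eq_stdGaussian_euclideanSpace (d : ℕ) :
    stdGaussian d = ProbabilityTheory.stdGaussian (EuclideanSpace ℝ (Fin d)) :=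
  map_pi_eq_stdGaussian

theorem gaussian_smoothing_close_of_gradient_lipschitz_general
    (d : ℕ) (f : EuclideanSpace ℝ (Fin d) → ℝ) (L₁ : ℝ)
    (hdiff : Differentiable ℝ f)
    (hgrad : ∀ x y, ‖gradient f y - gradient f x‖ ≤ L₁ * ‖y - x‖)
    (ν : ℝ) (x : EuclideanSpace ℝ (Fin d)) :
    |(∫ v, f (x + ν • v) ∂(stdGaussian d)) - f x| ≤ ν ^ 2 / 2 * L₁ * d := by
  have := abs_integral_comp_add_smul_sub_le IsGaussian.memLp_two_id integral_id_stdGaussian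
    hdiff hgrad x ν
  rwa [integral_norm_sq_stdGaussian, finrank_euclideanSpace_fin,
    ← stdGaussian_eq_stdGaussian_euclideanSpace] at this

/-- if `f` has `L₁`-Lipschitz gradient, then its Gaussian smoothing
satisfies `|f_ν(x) − f(x)| ≤ (ν²/2) L₁ d`. -/
theorem gaussian_smoothing_close_of_gradient_lipschitz
    (d : ℕ) (f : EuclideanSpace ℝ (Fin d) → ℝ) (L₁ : ℝ)
    (hdiff : Differentiable ℝ f)
    (hgrad : ∀ x y, ‖gradient f y - gradient f x‖ ≤ L₁ * ‖y - x‖)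
    (ν : ℝ) (hν : 0 < ν) (x : EuclideanSpace ℝ (Fin d)) :
    |(∫ v, f (x + ν • v) ∂(stdGaussian d)) - f x| ≤ ν ^ 2 / 2 * L₁ * d :=
  gaussian_smoothing_close_of_gradient_lipschitz_general d f L₁ hdiff hgrad ν x
end

section
/- Let f : ℝ^d → ℝ be L₀-Lipschitz, μ > 0, ν ≥ 0, u ~ N(0, I_d), and v₁, v₂ ~ N(0, I_d) independent of u and of each other. Define the noisy two-point gradient estimator g_{μ,ν}(x) = ((f(x + μ u + ν v₁) − f(x + ν v₂))/μ) · u. Then E[‖g_{μ,ν}(x)‖²] ≤ C · L₀² · d² · (ν/μ + c)² for absolute constants C, c (e.g., E[‖g_{μ,ν}(x)‖²] ≤ 4 L₀² (d+4)² (ν/μ + 1)² suffices). -/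
/-!
Since `f` is `L₀`-Lipschitz, `|f(x + μu + νv₁) - f(x + νv₂)| ≤ L₀ (μ‖u‖ + ν‖v₁‖ + ν‖v₂‖)`, and the
weighted Cauchy–Schwarz inequality `(μa + νb + νc)² ≤ (μ + 2ν)(μa² + νb² + νc²)` bounds `‖g‖²` by
`(L₀/μ)² (μ + 2ν) (μ‖u‖⁴ + ν‖u‖²‖v₁‖² + ν‖u‖²‖v₂‖²)`. By independence its expectation is
`(L₀/μ)² (μ + 2ν) (μ E‖u‖⁴ + 2ν (E‖u‖²)²)`, and for the standard Gaussian `E‖u‖² = d` and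
`E‖u‖⁴ ≤ d ∑ E uᵢ⁴ = 3d²`; it remains that `(1 + 2t)(3 + 2t) ≤ 4(1 + t)²` for `t = ν/μ ≥ 0`.
The Gaussian moments are read off the derivatives at `0` of the moment generating function
`e^{t²/2}`.
-/

open MeasureTheory ProbabilityTheory

open Real Polynomial
open scoped ENNReal

noncomputable def gaussianMGFPoly (n : ℕ) : ℝ[X] :=
  (fun p : ℝ[X] => derivative p + X * p)^[n] 1

lemma deriv_eval_mul_exp_sq_half (p : ℝ[X]) :
    deriv (fun s => p.eval s * rexp (s ^ 2 / 2)) =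
      fun t => (derivative p + X * p).eval t * rexp (t ^ 2 / 2) := by
  ext t
  refine ((p.hasDerivAt t).mul ((hasDerivAt_pow 2 t).div_const 2).exp).deriv.trans ?_
  simp only [eval_add, eval_mul, eval_X]
  push_cast
  ring

lemma iteratedDeriv_exp_sq_half (n : ℕ) :
    iteratedDeriv n (fun s => rexp (s ^ 2 / 2)) =
      fun t => (gaussianMGFPoly n).eval t * rexp (t ^ 2 / 2) := by
  induction n with
  | zero => simp [gaussianMGFPoly]
  | succ n ih =>
    rw [iteratedDeriv_succ, ih, deriv_eval_mul_exp_sq_half]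
    simp only [gaussianMGFPoly, Function.iterate_succ_apply']

lemma integral_pow_gaussianReal (n : ℕ) :
    ∫ x, x ^ n ∂gaussianReal 0 1 = (gaussianMGFPoly n).eval 0 := by
  have h := iteratedDeriv_mgf_zero (X := fun x : ℝ => x) (μ := gaussianReal 0 1) (by simp) n
  simp only [mgf_fun_id_gaussianReal, Pi.pow_apply] at h
  have hmgf : (fun t => rexp (0 * t + (1 : NNReal) * t ^ 2 / 2)) = fun s => rexp (s ^ 2 / 2) := by
    ext s
    simp
  rw [← h, hmgf, iteratedDeriv_exp_sq_half]
  simp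

lemma integral_sq_gaussianReal : ∫ x, x ^ 2 ∂gaussianReal 0 1 = 1 := by
  simp only [integral_pow_gaussianReal, gaussianMGFPoly, Function.iterate_succ_apply',
    Function.iterate_zero_apply, derivative_add, derivative_mul, derivative_X, derivative_one,
    derivative_zero, eval_add, eval_mul, eval_X, eval_one, eval_zero]
  norm_num

lemma integral_pow_four_gaussianReal : ∫ x, x ^ 4 ∂gaussianReal 0 1 = 3 := by
  simp only [integral_pow_gaussianReal, gaussianMGFPoly, Function.iterate_succ_apply',
    Function.iterate_zero_apply, derivative_add, derivative_mul, derivative_X, derivative_one,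
    derivative_zero, eval_add, eval_mul, eval_X, eval_one, eval_zero]
  norm_num

lemma integrable_pow_gaussianReal (n : ℕ) :
    Integrable (fun x : ℝ => x ^ n) (gaussianReal 0 1) :=
  integrable_pow_of_mem_interior_integrableExpSet (by simp) n

section Pi

variable {d : ℕ} (n : ℕ) (i : Fin d)

lemma integrable_eval_pow_pi_gaussianReal :
    Integrable (fun x : Fin d → ℝ => x i ^ n) (Measure.pi fun _ => gaussianReal 0 1) :=
  integrable_comp_eval (X := fun _ => ℝ) (integrable_pow_gaussianReal n)

lemma integral_eval_pow_pi_gaussianReal :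
    ∫ x : Fin d → ℝ, x i ^ n ∂(Measure.pi fun _ => gaussianReal 0 1) =
      ∫ x, x ^ n ∂gaussianReal 0 1 :=
  integral_comp_eval (X := fun _ => ℝ) (integrable_pow_gaussianReal n).aestronglyMeasurable

end Pi

lemma norm_toLp_pow_four_le {d : ℕ} (x : Fin d → ℝ) :
    ‖WithLp.toLp 2 x‖ ^ 4 ≤ d * ∑ i, x i ^ 4 := by
  have h := sq_sum_le_card_mul_sum_sq (s := Finset.univ) (f := fun i => x i ^ 2)
  simp only [Finset.card_univ, Fintype.card_fin, ← pow_mul] at h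
  rwa [show 4 = 2 * 2 by rfl, pow_mul, EuclideanSpace.real_norm_sq_eq]

lemma stdGaussian_eq (d : ℕ) :
    _root_.stdGaussian d = ProbabilityTheory.stdGaussian (EuclideanSpace ℝ (Fin d)) :=
  map_pi_eq_stdGaussian

instance (d : ℕ) : IsGaussian (_root_.stdGaussian d) := stdGaussian_eq d ▸ inferInstance

lemma integral_stdGaussian_eq_integral_pi {d : ℕ} {F : EuclideanSpace ℝ (Fin d) → ℝ}
    (hF : Continuous F) :
    ∫ u, F u ∂_root_.stdGaussian d =
      ∫ x, F (WithLp.toLp 2 x) ∂(Measure.pi fun _ => gaussianReal 0 1) :=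
  integral_map (by fun_prop) hF.aestronglyMeasurable

lemma integral_norm_sq_stdGaussian_s6 (d : ℕ) : ∫ u, ‖u‖ ^ 2 ∂_root_.stdGaussian d = d := by
  rw [integral_stdGaussian_eq_integral_pi (F := fun u => ‖u‖ ^ 2) (by fun_prop)]
  simp_rw [EuclideanSpace.real_norm_sq_eq]
  rw [integral_finsetSum _ fun i _ => integrable_eval_pow_pi_gaussianReal 2 i]
  simp [integral_eval_pow_pi_gaussianReal, integral_sq_gaussianReal]

lemma integral_norm_pow_four_stdGaussian_le (d : ℕ) :
    ∫ u, ‖u‖ ^ 4 ∂_root_.stdGaussian d ≤ 3 * d ^ 2 := by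
  have h4 := integrable_eval_pow_pi_gaussianReal (d := d) 4
  rw [integral_stdGaussian_eq_integral_pi (F := fun u => ‖u‖ ^ 4) (by fun_prop)]
  calc ∫ x, ‖WithLp.toLp 2 x‖ ^ 4 ∂(Measure.pi fun _ => gaussianReal 0 1)
      ≤ ∫ x, d * ∑ i, x i ^ 4 ∂(Measure.pi fun _ => gaussianReal 0 1) :=
        integral_mono_of_nonneg (.of_forall fun x => by positivity)
          ((integrable_finsetSum Finset.univ fun i _ => h4 i).const_mul _)
          (.of_forall norm_toLp_pow_four_le)
    _ = 3 * d ^ 2 := by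
        rw [integral_const_mul, integral_finsetSum _ fun i _ => h4 i]
        simp [integral_eval_pow_pi_gaussianReal, integral_pow_four_gaussianReal]
        ring

section Majorant

variable {E : Type*} [NormedAddCommGroup E]

def estimatorMajorant (μ ν : ℝ) (w : E × E × E) : ℝ :=
  μ * ‖w.1‖ ^ 4 + ν * (‖w.1‖ ^ 2 * ‖w.2.1‖ ^ 2) + ν * (‖w.1‖ ^ 2 * ‖w.2.2‖ ^ 2)

variable [MeasurableSpace E] {γ : Measure E} [IsProbabilityMeasure γ]

lemma integrable_norm_sq_of_memLp_four (hγ : MemLp id 4 γ) :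
    Integrable (fun u : E => ‖u‖ ^ 2) γ :=
  (hγ.mono_exponent (by norm_num : (2 : ℝ≥0∞) ≤ 4)).integrable_norm_pow (by norm_num)

lemma integrable_estimatorMajorant (hγ : MemLp id 4 γ) (μ ν : ℝ) :
    Integrable (estimatorMajorant μ ν) (γ.prod (γ.prod γ)) :=
  have h2 := integrable_norm_sq_of_memLp_four hγ
  ((((hγ.integrable_norm_pow (by norm_num)).comp_fst _).const_mul μ).add
    ((h2.mul_prod (h2.comp_fst γ)).const_mul ν)).add ((h2.mul_prod (h2.comp_snd γ)).const_mul ν)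

lemma integral_estimatorMajorant (hγ : MemLp id 4 γ) (μ ν : ℝ) :
    ∫ w, estimatorMajorant μ ν w ∂γ.prod (γ.prod γ) =
      μ * ∫ u, ‖u‖ ^ 4 ∂γ + 2 * ν * (∫ u, ‖u‖ ^ 2 ∂γ) ^ 2 := by
  have h2 := integrable_norm_sq_of_memLp_four hγ
  have h4₁ : Integrable (fun w : E × E × E => ‖w.1‖ ^ 4) (γ.prod (γ.prod γ)) :=
    (hγ.integrable_norm_pow (by norm_num)).comp_fst _
  have h2₁ : Integrable (fun w : E × E × E => ‖w.1‖ ^ 2 * ‖w.2.1‖ ^ 2) (γ.prod (γ.prod γ)) :=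
    h2.mul_prod (h2.comp_fst γ)
  have h2₂ : Integrable (fun w : E × E × E => ‖w.1‖ ^ 2 * ‖w.2.2‖ ^ 2) (γ.prod (γ.prod γ)) :=
    h2.mul_prod (h2.comp_snd γ)
  simp only [estimatorMajorant]
  rw [integral_add (by exact (h4₁.const_mul μ).add (h2₁.const_mul ν)) (h2₂.const_mul ν),
    integral_add (h4₁.const_mul μ) (h2₁.const_mul ν),
    integral_const_mul, integral_const_mul, integral_const_mul,
    integral_fun_fst (fun u : E => ‖u‖ ^ 4),
    integral_prod_mul (fun u : E => ‖u‖ ^ 2) (fun v : E × E => ‖v.1‖ ^ 2),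
    integral_prod_mul (fun u : E => ‖u‖ ^ 2) (fun v : E × E => ‖v.2‖ ^ 2),
    integral_fun_fst (fun u : E => ‖u‖ ^ 2), integral_fun_snd (fun u : E => ‖u‖ ^ 2)]
  simp only [probReal_univ, one_smul]
  ring

end Majorant

section Estimator

variable {E : Type*} [NormedAddCommGroup E] [NormedSpace ℝ E]

noncomputable def noisyTwoPointEstimator (f : E → ℝ) (μ ν : ℝ) (x : E) (w : E × E × E) : E :=
  ((f (x + μ • w.1 + ν • w.2.1) - f (x + ν • w.2.2)) / μ) • w.1

lemma sq_two_point_sub_le {f : E → ℝ} {L₀ : ℝ} (hf : ∀ x y, |f y - f x| ≤ L₀ * ‖y - x‖)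
    {μ ν : ℝ} (hμ : 0 ≤ μ) (hν : 0 ≤ ν) (x u v₁ v₂ : E) :
    (f (x + μ • u + ν • v₁) - f (x + ν • v₂)) ^ 2 ≤
      L₀ ^ 2 * (μ * ‖u‖ + ν * ‖v₁‖ + ν * ‖v₂‖) ^ 2 := by
  set y := x + μ • u + ν • v₁
  set z := x + ν • v₂
  have hdist : ‖y - z‖ ≤ μ * ‖u‖ + ν * ‖v₁‖ + ν * ‖v₂‖ := by
    rw [show y - z = μ • u + ν • v₁ - ν • v₂ by simp only [y, z]; abel]
    grw [norm_sub_le, norm_add_le]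
    simp only [norm_smul, Real.norm_of_nonneg hμ, Real.norm_of_nonneg hν, le_refl]
  have hLip := hf z y
  calc (f y - f z) ^ 2 ≤ (L₀ * ‖y - z‖) ^ 2 := sq_le_sq' (neg_le_of_abs_le hLip) (le_of_abs_le hLip)
    _ = L₀ ^ 2 * ‖y - z‖ ^ 2 := mul_pow _ _ _
    _ ≤ L₀ ^ 2 * (μ * ‖u‖ + ν * ‖v₁‖ + ν * ‖v₂‖) ^ 2 := by gcongr

lemma mul_add_mul_add_mul_sq_le {μ ν : ℝ} (hμ : 0 ≤ μ) (hν : 0 ≤ ν) (a b c : ℝ) :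
    (μ * a + ν * b + ν * c) ^ 2 ≤ (μ + 2 * ν) * (μ * a ^ 2 + ν * b ^ 2 + ν * c ^ 2) := by
  nlinarith [mul_nonneg (mul_nonneg hμ hν) (sq_nonneg (a - b)),
    mul_nonneg (mul_nonneg hμ hν) (sq_nonneg (a - c)),
    mul_nonneg (mul_nonneg hν hν) (sq_nonneg (b - c))]

lemma norm_noisyTwoPointEstimator_sq_le {f : E → ℝ} {L₀ : ℝ}
    (hf : ∀ x y, |f y - f x| ≤ L₀ * ‖y - x‖) {μ ν : ℝ} (hμ : 0 < μ) (hν : 0 ≤ ν)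
    (x : E) (w : E × E × E) :
    ‖noisyTwoPointEstimator f μ ν x w‖ ^ 2 ≤
      (L₀ / μ) ^ 2 * (μ + 2 * ν) * estimatorMajorant μ ν w := by
  obtain ⟨u, v₁, v₂⟩ := w
  have hΔ := sq_two_point_sub_le hf hμ.le hν x u v₁ v₂
  have hCS := mul_add_mul_add_mul_sq_le hμ.le hν ‖u‖ ‖v₁‖ ‖v₂‖
  rw [noisyTwoPointEstimator, estimatorMajorant, norm_smul, mul_pow, Real.norm_eq_abs, sq_abs,
    div_pow]
  calc (f (x + μ • u + ν • v₁) - f (x + ν • v₂)) ^ 2 / μ ^ 2 * ‖u‖ ^ 2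
      ≤ L₀ ^ 2 * ((μ + 2 * ν) * (μ * ‖u‖ ^ 2 + ν * ‖v₁‖ ^ 2 + ν * ‖v₂‖ ^ 2)) / μ ^ 2 *
          ‖u‖ ^ 2 := by
        gcongr
        exact hΔ.trans (by gcongr)
    _ = _ := by rw [div_pow]; ring

variable [MeasurableSpace E] {γ : Measure E} [IsProbabilityMeasure γ]

theorem integral_norm_noisyTwoPointEstimator_sq_le (hγ : MemLp id 4 γ) {f : E → ℝ} {L₀ : ℝ}
    (hf : ∀ x y, |f y - f x| ≤ L₀ * ‖y - x‖) {μ ν : ℝ} (hμ : 0 < μ) (hν : 0 ≤ ν) (x : E) :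
    ∫ w, ‖noisyTwoPointEstimator f μ ν x w‖ ^ 2 ∂γ.prod (γ.prod γ) ≤
      (L₀ / μ) ^ 2 * (μ + 2 * ν) * (μ * ∫ u, ‖u‖ ^ 4 ∂γ + 2 * ν * (∫ u, ‖u‖ ^ 2 ∂γ) ^ 2) := by
  rw [← integral_estimatorMajorant hγ, ← integral_const_mul]
  exact integral_mono_of_nonneg (.of_forall fun _ => by positivity)
    ((integrable_estimatorMajorant hγ μ ν).const_mul _)
    (.of_forall (norm_noisyTwoPointEstimator_sq_le hf hμ hν x))

end Estimator

theorem noisy_estimator_second_moment_general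
    (d : ℕ) (f : EuclideanSpace ℝ (Fin d) → ℝ) (L₀ : ℝ)
    (hf : ∀ x y, |f y - f x| ≤ L₀ * ‖y - x‖)
    (μ ν : ℝ) (hμ : 0 < μ) (hν : 0 ≤ ν) (x : EuclideanSpace ℝ (Fin d)) :
    (∫ w, ‖((f (x + μ • w.1 + ν • w.2.1) - f (x + ν • w.2.2)) / μ) • w.1‖ ^ 2
        ∂((stdGaussian d).prod ((stdGaussian d).prod (stdGaussian d)))) ≤
      4 * L₀ ^ 2 * ((d : ℝ) + 4) ^ 2 * (ν / μ + 1) ^ 2 := by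
  have ht : 0 ≤ ν / μ := div_nonneg hν hμ.le
  refine (integral_norm_noisyTwoPointEstimator_sq_le
    (IsGaussian.memLp_id _ 4 ENNReal.ofNat_ne_top) hf hμ hν x).trans ?_
  calc (L₀ / μ) ^ 2 * (μ + 2 * ν) *
        (μ * ∫ u, ‖u‖ ^ 4 ∂stdGaussian d + 2 * ν * (∫ u, ‖u‖ ^ 2 ∂stdGaussian d) ^ 2)
      ≤ (L₀ / μ) ^ 2 * (μ + 2 * ν) * (μ * (3 * d ^ 2) + 2 * ν * d ^ 2) := by
        rw [integral_norm_sq_stdGaussian_s6]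
        gcongr
        exact integral_norm_pow_four_stdGaussian_le d
    _ = L₀ ^ 2 * d ^ 2 * ((1 + 2 * (ν / μ)) * (3 + 2 * (ν / μ))) := by
        field_simp
    _ ≤ L₀ ^ 2 * ((d : ℝ) + 4) ^ 2 * (4 * (ν / μ + 1) ^ 2) := by
        gcongr L₀ ^ 2 * ?_ * ?_
        · exact pow_le_pow_left₀ d.cast_nonneg (by linarith) 2
        · nlinarith
    _ = 4 * L₀ ^ 2 * ((d : ℝ) + 4) ^ 2 * (ν / μ + 1) ^ 2 := by ring

/-- second-moment bound for the noisy two-point gradient estimator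
`g_{μ,ν}(x) = ((f(x + μu + νv₁) − f(x + νv₂))/μ) u` with `u, v₁, v₂` independent
standard Gaussians: `E[‖g_{μ,ν}(x)‖²] ≤ 4 L₀² (d+4)² (ν/μ + 1)²`. -/
theorem noisy_estimator_second_moment
    (d : ℕ) (f : EuclideanSpace ℝ (Fin d) → ℝ) (L₀ : ℝ) (hL₀ : 0 ≤ L₀)
    (hf : ∀ x y, |f y - f x| ≤ L₀ * ‖y - x‖)
    (μ ν : ℝ) (hμ : 0 < μ) (hν : 0 ≤ ν) (x : EuclideanSpace ℝ (Fin d)) :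
    (∫ w, ‖((f (x + μ • w.1 + ν • w.2.1) - f (x + ν • w.2.2)) / μ) • w.1‖ ^ 2
        ∂((stdGaussian d).prod ((stdGaussian d).prod (stdGaussian d)))) ≤
      4 * L₀ ^ 2 * ((d : ℝ) + 4) ^ 2 * (ν / μ + 1) ^ 2 :=
  noisy_estimator_second_moment_general d f L₀ hf μ ν hμ hν x
end

section
/- Let f : ℝ^d → ℝ be L₀-Lipschitz, μ > 0, ν > 0, and fix x, u with h(x) = f(x + μ u) − f(x) ≠ 0. For independent v₁, v₂ ~ N(0, I_d), define h_ν(x) = f(x + μ u + ν v₁) − f(x + ν v₂). Then P(sign(h_ν(x)) ≠ sign(h(x))) ≤ 2 L₀ ν √d / |h(x)|. -/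
/-!
A sign flip of `h_ν(x)` against `h(x)` forces `|h_ν(x) - h(x)| ≥ |h(x)|`, so by Markov's
inequality its probability is at most `E|h_ν(x) - h(x)| / |h(x)|`. The Lipschitz bound gives
`|h_ν(x) - h(x)| ≤ L₀ ν (‖v₁‖ + ‖v₂‖)`, and for a standard Gaussian vector
`E‖v‖ ≤ (E‖v‖²)^(1/2) = √d`.
-/

open MeasureTheory ProbabilityTheory

open scoped NNReal

theorem abs_le_abs_sub_of_sign_ne {a b : ℝ} (h : Real.sign a ≠ Real.sign b) :
    |b| ≤ |a - b| := by
  contrapose! h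
  rcases lt_trichotomy b 0 with hb | rfl | hb
  · rw [Real.sign_of_neg hb, Real.sign_of_neg (by linarith [le_abs_self (a - b), abs_of_neg hb])]
  · simp only [sub_zero, abs_zero] at h
    exact absurd h (abs_nonneg a).not_gt
  · rw [Real.sign_of_pos hb, Real.sign_of_pos (by linarith [neg_abs_le (a - b), abs_of_pos hb])]

theorem lintegral_enorm_sub_sq_gaussianReal (m : ℝ) (v : ℝ≥0) :
    ∫⁻ x, ‖x - m‖ₑ ^ 2 ∂gaussianReal m v = v := by
  have h := (memLp_id_gaussianReal (μ := m) (v := v) 2).ofReal_variance_eq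
  rw [variance_id_gaussianReal, ENNReal.ofReal_coe_nnreal] at h
  simp only [h, evariance, id_eq, integral_id_gaussianReal]

theorem lintegral_enorm_sq_stdGaussian (d : ℕ) :
    ∫⁻ y, ‖y‖ₑ ^ 2 ∂stdGaussian d = d := by
  have hnorm (z : Fin d → ℝ) :
      ‖(EuclideanSpace.equiv (Fin d) ℝ).symm z‖ₑ ^ 2 = ∑ i, ‖z i‖ₑ ^ 2 := by
    simp only [enorm_eq_nnnorm, ← ENNReal.coe_pow, EuclideanSpace.nnnorm_eq, NNReal.sq_sqrt]
    push_cast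
    rfl
  rw [_root_.stdGaussian, lintegral_map (by fun_prop) (by fun_prop)]
  simp only [hnorm]
  rw [lintegral_finsetSum _ (fun i _ => by fun_prop)]
  have hcoord (i : Fin d) :
      ∫⁻ z : Fin d → ℝ, ‖z i‖ₑ ^ 2 ∂Measure.pi (fun _ => gaussianReal 0 1) = 1 := by
    rw [(measurePreserving_eval (fun _ : Fin d => gaussianReal 0 1) i).lintegral_comp
      (f := fun t => ‖t‖ₑ ^ 2) (by fun_prop)]
    simpa using lintegral_enorm_sub_sq_gaussianReal 0 1
  simp [hcoord]

theorem sq_lintegral_enorm_le_lintegral_enorm_sq {α E : Type*} [MeasurableSpace α]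
    {μ : Measure α} [IsProbabilityMeasure μ] [NormedAddCommGroup E] {f : α → E}
    (hf : AEStronglyMeasurable f μ) :
    (∫⁻ x, ‖f x‖ₑ ∂μ) ^ 2 ≤ ∫⁻ x, ‖f x‖ₑ ^ 2 ∂μ := by
  have h := eLpNorm_le_eLpNorm_of_exponent_le (p := 1) (q := 2) one_le_two hf
  rw [eLpNorm_one_eq_lintegral_enorm] at h
  calc _ ≤ eLpNorm f 2 μ ^ 2 := by gcongr
    _ = _ := by
        simpa using eLpNorm_nnreal_pow_eq_lintegral (f := f) (μ := μ) (p := 2) two_ne_zero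

instance (d : ℕ) : IsProbabilityMeasure (stdGaussian d) :=
  Measure.isProbabilityMeasure_map (by fun_prop)

theorem lintegral_enorm_stdGaussian_le (d : ℕ) :
    ∫⁻ y, ‖y‖ₑ ∂stdGaussian d ≤ ENNReal.ofReal √d := by
  rw [← ENNReal.pow_le_pow_left_iff two_ne_zero, ← ENNReal.ofReal_pow (Real.sqrt_nonneg _),
    Real.sq_sqrt d.cast_nonneg, ENNReal.ofReal_natCast, ← lintegral_enorm_sq_stdGaussian]
  exact sq_lintegral_enorm_le_lintegral_enorm_sq aestronglyMeasurable_id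

theorem lintegral_enorm_le_sqrt_of_map_eq_stdGaussian {Ω : Type*} [MeasurableSpace Ω]
    {P : Measure Ω} {d : ℕ} {v : Ω → EuclideanSpace ℝ (Fin d)} (hv : Measurable v)
    (hlaw : P.map v = stdGaussian d) :
    ∫⁻ ω, ‖v ω‖ₑ ∂P ≤ ENNReal.ofReal √d := by
  rw [← lintegral_map measurable_enorm hv, hlaw]
  exact lintegral_enorm_stdGaussian_le d

theorem abs_perturbed_sub_sub_le {E : Type*} [SeminormedAddCommGroup E] {f : E → ℝ} {L : ℝ}
    (hf : ∀ x y, |f y - f x| ≤ L * ‖y - x‖) (a b p q : E) :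
    |(f (a + p) - f (b + q)) - (f a - f b)| ≤ L * (‖p‖ + ‖q‖) := by
  have hp := hf a (a + p)
  have hq := hf b (b + q)
  rw [add_sub_cancel_left] at hp hq
  calc |(f (a + p) - f (b + q)) - (f a - f b)|
      = |(f (a + p) - f a) - (f (b + q) - f b)| := by ring_nf
    _ ≤ |f (a + p) - f a| + |f (b + q) - f b| := abs_sub _ _
    _ ≤ L * (‖p‖ + ‖q‖) := by linarith

theorem lintegral_enorm_perturbed_sub_le {Ω : Type*} [MeasurableSpace Ω] {P : Measure Ω}
    {d : ℕ} {f : EuclideanSpace ℝ (Fin d) → ℝ} {L : ℝ} (hL : 0 ≤ L)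
    (hf : ∀ x y, |f y - f x| ≤ L * ‖y - x‖) {ν : ℝ} (hν : 0 ≤ ν)
    (a b : EuclideanSpace ℝ (Fin d)) {v₁ v₂ : Ω → EuclideanSpace ℝ (Fin d)}
    (hv₁m : Measurable v₁) (hv₂m : Measurable v₂)
    (hv₁ : P.map v₁ = stdGaussian d) (hv₂ : P.map v₂ = stdGaussian d) :
    ∫⁻ ω, ‖(f (a + ν • v₁ ω) - f (b + ν • v₂ ω)) - (f a - f b)‖ₑ ∂P
      ≤ ENNReal.ofReal (2 * L * ν * √d) := by
  have hpoint (ω : Ω) : ‖(f (a + ν • v₁ ω) - f (b + ν • v₂ ω)) - (f a - f b)‖ₑ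
      ≤ ENNReal.ofReal (L * ν) * (‖v₁ ω‖ₑ + ‖v₂ ω‖ₑ) := by
    rw [Real.enorm_eq_ofReal_abs, ← ofReal_norm, ← ofReal_norm,
      ← ENNReal.ofReal_add (norm_nonneg _) (norm_nonneg _), ← ENNReal.ofReal_mul (by positivity)]
    refine ENNReal.ofReal_le_ofReal ((abs_perturbed_sub_sub_le hf _ _ _ _).trans_eq ?_)
    rw [norm_smul, norm_smul, Real.norm_of_nonneg hν]
    ring
  calc ∫⁻ ω, ‖(f (a + ν • v₁ ω) - f (b + ν • v₂ ω)) - (f a - f b)‖ₑ ∂P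
      ≤ ENNReal.ofReal (L * ν) * (∫⁻ ω, ‖v₁ ω‖ₑ ∂P + ∫⁻ ω, ‖v₂ ω‖ₑ ∂P) := by
        rw [← lintegral_add_left hv₁m.enorm, ← lintegral_const_mul _ (by fun_prop)]
        exact lintegral_mono hpoint
    _ ≤ ENNReal.ofReal (L * ν) * (ENNReal.ofReal √d + ENNReal.ofReal √d) := by
        gcongr
        · exact lintegral_enorm_le_sqrt_of_map_eq_stdGaussian hv₁m hv₁
        · exact lintegral_enorm_le_sqrt_of_map_eq_stdGaussian hv₂m hv₂
    _ = ENNReal.ofReal (2 * L * ν * √d) := by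
        rw [← ENNReal.ofReal_add (by positivity) (by positivity),
          ← ENNReal.ofReal_mul (by positivity)]
        ring_nf

theorem measure_sign_ne_le_lintegral_div {Ω : Type*} [MeasurableSpace Ω] (P : Measure Ω)
    {Y : Ω → ℝ} (hY : AEMeasurable Y P) {b : ℝ} (hb : b ≠ 0) :
    P {ω | Real.sign (Y ω) ≠ Real.sign b} ≤ (∫⁻ ω, ‖Y ω - b‖ₑ ∂P) / ‖b‖ₑ :=
  calc P {ω | Real.sign (Y ω) ≠ Real.sign b} ≤ P {ω | ‖b‖ₑ ≤ ‖Y ω - b‖ₑ} :=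
        measure_mono fun ω hω => show ‖b‖ₑ ≤ ‖Y ω - b‖ₑ by
          simpa only [Real.enorm_eq_ofReal_abs] using
            ENNReal.ofReal_le_ofReal (abs_le_abs_sub_of_sign_ne hω)
    _ ≤ (∫⁻ ω, ‖Y ω - b‖ₑ ∂P) / ‖b‖ₑ :=
        meas_ge_le_lintegral_div (hY.sub_const b).enorm (enorm_ne_zero.2 hb) enorm_ne_top

theorem sign_flip_probability_bound_general
    {Ω : Type*} [MeasureSpace Ω]
    (d : ℕ) (f : EuclideanSpace ℝ (Fin d) → ℝ) (L₀ : ℝ) (hL₀ : 0 ≤ L₀)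
    (hf : ∀ x y, |f y - f x| ≤ L₀ * ‖y - x‖)
    (μ ν : ℝ) (hν : 0 < ν)
    (u x : EuclideanSpace ℝ (Fin d))
    (hh : f (x + μ • u) - f x ≠ 0)
    (v₁ v₂ : Ω → EuclideanSpace ℝ (Fin d))
    (hv₁m : Measurable v₁) (hv₂m : Measurable v₂)
    (hv₁ : Measure.map v₁ ℙ = stdGaussian d)
    (hv₂ : Measure.map v₂ ℙ = stdGaussian d) :
    (ℙ {ω | Real.sign (f (x + μ • u + ν • v₁ ω) - f (x + ν • v₂ ω)) ≠
        Real.sign (f (x + μ • u) - f x)}).toReal ≤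
      2 * L₀ * ν * Real.sqrt d / |f (x + μ • u) - f x| := by
  have hfc : Continuous f :=
    (LipschitzWith.of_dist_le_mul (K := L₀.toNNReal) fun a b => by
      simpa [Real.dist_eq, dist_eq_norm, Real.coe_toNNReal L₀ hL₀] using hf b a).continuous
  have hY : Measurable fun ω => f (x + μ • u + ν • v₁ ω) - f (x + ν • v₂ ω) := by fun_prop
  refine ENNReal.toReal_le_of_le_ofReal (by positivity) ?_
  calc _ ≤ _ := measure_sign_ne_le_lintegral_div ℙ hY.aemeasurable hh
    _ ≤ ENNReal.ofReal (2 * L₀ * ν * √d) / ENNReal.ofReal |f (x + μ • u) - f x| := by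
        rw [Real.enorm_eq_ofReal_abs]
        gcongr
        exact lintegral_enorm_perturbed_sub_le hL₀ hf hν.le _ _ hv₁m hv₂m hv₁ hv₂
    _ = _ := (ENNReal.ofReal_div_of_pos (abs_pos.2 hh)).symm

/-- Theorem 3 of the paper: the probability that the random noise
defense flips the sign of the search criterion is at most `2 L₀ ν √d / |h(x)|`. -/
theorem sign_flip_probability_bound
    {Ω : Type*} [MeasureSpace Ω] [IsProbabilityMeasure (ℙ : Measure Ω)]
    (d : ℕ) (f : EuclideanSpace ℝ (Fin d) → ℝ) (L₀ : ℝ) (hL₀ : 0 ≤ L₀)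
    (hf : ∀ x y, |f y - f x| ≤ L₀ * ‖y - x‖)
    (μ ν : ℝ) (hμ : 0 < μ) (hν : 0 < ν)
    (u x : EuclideanSpace ℝ (Fin d))
    (hh : f (x + μ • u) - f x ≠ 0)
    (v₁ v₂ : Ω → EuclideanSpace ℝ (Fin d))
    (hv₁m : Measurable v₁) (hv₂m : Measurable v₂)
    (hv₁ : Measure.map v₁ ℙ = stdGaussian d)
    (hv₂ : Measure.map v₂ ℙ = stdGaussian d)
    (hindep : IndepFun v₁ v₂) :
    (ℙ {ω | Real.sign (f (x + μ • u + ν • v₁ ω) - f (x + ν • v₂ ω)) ≠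
        Real.sign (f (x + μ • u) - f x)}).toReal ≤
      2 * L₀ * ν * Real.sqrt d / |f (x + μ • u) - f x| :=
  sign_flip_probability_bound_general d f L₀ hL₀ hf μ ν hν u x hh v₁ v₂ hv₁m hv₂m hv₁ hv₂
end
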